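/- The 7-cube Q_7 contains four pairwise edge-disjoint symmetric chain decompositions. -/

import Mathlib

/-- The Hamming weight of a bitstring of length `n`, i.e., its number of 1-bits. -/
def wt {n : ℕ} (x : Fin n → Bool) : ℕ := (Finset.univ.filter fun i => x i = true).card

/-- The `n`-dimensional hypercube: vertices are bitstrings of length `n`, two of which are
adjacent iff they differ in exactly one position. -/
def cube (n : ℕ) : SimpleGraph (Fin n → Bool) where
  Adj x y := hammingDist x y = 1
  symm := ⟨by intro x y h; rwa [hammingDist_comm]⟩
  loopless := ⟨by intro x h; simp [hammingDist_self] at h⟩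
/-- A symmetric chain in the `n`-cube: a path `(x_k, x_{k+1}, …, x_{n−k})` in `cube n`
where `x_i` has Hamming weight `i` for each `k ≤ i ≤ n − k`. -/
def IsSymChain (n : ℕ) (c : List (Fin n → Bool)) : Prop :=
  c ≠ [] ∧ c.Chain' (cube n).Adj ∧
  ∃ k : ℕ, (∀ (i : ℕ) (h : i < c.length), wt (c.get ⟨i, h⟩) = k + i) ∧
    2 * k + (c.length - 1) = n

/-- A symmetric chain decomposition of the `n`-cube: a collection of symmetric chains
whose vertex sets partition the vertex set. -/
def IsSCD (n : ℕ) (D : Set (List (Fin n → Bool))) : Prop :=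
  (∀ c ∈ D, IsSymChain n c) ∧ ∀ x : Fin n → Bool, ∃! c, c ∈ D ∧ x ∈ c

/-- The edges lying on a chain, i.e., the unordered pairs of consecutive entries. -/
def chainEdges {V : Type*} (c : List V) : Set (Sym2 V) :=
  {e | ∃ (i : ℕ) (h : i + 1 < c.length),
    e = s(c.get ⟨i, Nat.lt_of_succ_lt h⟩, c.get ⟨i + 1, h⟩)}

/-- All edges lying on some chain of the collection `D`. -/
def scdEdges {n : ℕ} (D : Set (List (Fin n → Bool))) : Set (Sym2 (Fin n → Bool)) :=
  ⋃ c ∈ D, chainEdges c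

/-- Two chain decompositions are edge-disjoint if no edge lies on a chain of one
and also on a chain of the other. -/
def EdgeDisjointSCD {n : ℕ} (D D' : Set (List (Fin n → Bool))) : Prop :=
  Disjoint (scdEdges D) (scdEdges D')

/-!
The four decompositions are explicit. A bitstring `x` is encoded by the number whose `i`-th
binary digit is `x i`, and each decomposition is written as a list of chains of codes. The
symmetric-chain, partition and edge-disjointness conditions are checked by evaluation on the
codes; since `0, …, 2 ^ n - 1` decode bijectively onto the vertices of `Q_n`, they transfer
to the decompositions of the cube.
-/

def bits (n m : ℕ) : Fin n → Bool := fun i => m.testBit i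

theorem bits_injOn (n : ℕ) : Set.InjOn (bits n) (Set.Iio (2 ^ n)) := by
  intro a ha b hb hab
  refine Nat.eq_of_testBit_eq fun i => ?_
  by_cases hi : i < n
  · exact congrFun hab ⟨i, hi⟩
  · have hn : 2 ^ n ≤ 2 ^ i := Nat.pow_le_pow_right two_pos (not_lt.1 hi)
    rw [Nat.testBit_lt_two_pow (ha.trans_le hn), Nat.testBit_lt_two_pow (hb.trans_le hn)]

theorem exists_lt_bits_eq (n : ℕ) (x : Fin n → Bool) : ∃ m < 2 ^ n, bits n m = x := by
  obtain ⟨m, hm, hx⟩ := Finset.surj_on_of_inj_on_of_card_le (s := Finset.range (2 ^ n))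
    (t := Finset.univ) (fun m _ => bits n m) (fun _ _ => Finset.mem_univ _)
    (fun a b ha hb h => bits_injOn n (Finset.mem_range.1 ha) (Finset.mem_range.1 hb) h)
    (by simp) x (Finset.mem_univ x)
  exact ⟨m, Finset.mem_range.1 hm, hx.symm⟩

instance (n : ℕ) : DecidableRel (cube n).Adj := fun x y =>
  inferInstanceAs (Decidable (hammingDist x y = 1))

theorem isSymChain_iff {n : ℕ} {c : List (Fin n → Bool)} :
    IsSymChain n c ↔ c ≠ [] ∧ c.IsChain (cube n).Adj ∧
      (∀ (i : ℕ) (h : i < c.length), wt (c.get ⟨i, h⟩) = wt c.headI + i) ∧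
      2 * wt c.headI + (c.length - 1) = n := by
  refine ⟨fun ⟨hne, hch, k, hwt, hlen⟩ => ?_,
    fun ⟨hne, hch, hwt, hlen⟩ => ⟨hne, hch, _, hwt, hlen⟩⟩
  obtain ⟨x, c, rfl⟩ := List.exists_cons_of_ne_nil hne
  obtain rfl : wt x = k := by simpa using hwt 0 (by simp)
  exact ⟨hne, hch, hwt, hlen⟩

instance (n : ℕ) : DecidablePred (IsSymChain n) := fun _ =>
  decidable_of_iff _ isSymChain_iff.symm

def IsCodeSCD (n : ℕ) (S : List (List ℕ)) : Prop :=
  (∀ L ∈ S, IsSymChain n (L.map (bits n))) ∧ S.flatten.Perm (List.range (2 ^ n))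

instance (n : ℕ) (S : List (List ℕ)) : Decidable (IsCodeSCD n S) :=
  inferInstanceAs (Decidable (_ ∧ _))

theorem List.eq_of_mem_of_nodup_flatten {α : Type*} {S : List (List α)}
    (h : S.flatten.Nodup) {L L' : List α} (hL : L ∈ S) (hL' : L' ∈ S) {a : α} (ha : a ∈ L)
    (ha' : a ∈ L') : L = L' := by
  by_contra hne
  have : Std.Symm (@List.Disjoint α) := ⟨fun _ _ h => h.symm⟩
  exact (List.nodup_flatten.1 h).2.forall hL hL' hne ha ha'

theorem IsCodeSCD.lt_of_mem {n : ℕ} {S : List (List ℕ)} (h : IsCodeSCD n S) {m : ℕ}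
    (hm : m ∈ S.flatten) : m < 2 ^ n :=
  List.mem_range.1 (h.2.subset hm)

theorem IsCodeSCD.isSCD {n : ℕ} {S : List (List ℕ)} (h : IsCodeSCD n S) :
    IsSCD n (List.map (bits n) '' {L | L ∈ S}) := by
  refine ⟨?_, fun x => ?_⟩
  · rintro _ ⟨L, hL, rfl⟩
    exact h.1 L hL
  obtain ⟨m, hm, rfl⟩ := exists_lt_bits_eq n x
  obtain ⟨L, hL, hmL⟩ := List.mem_flatten.1 (h.2.mem_iff.2 (List.mem_range.2 hm))
  refine ⟨L.map (bits n), ⟨⟨L, hL, rfl⟩, List.mem_map_of_mem hmL⟩, ?_⟩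
  rintro _ ⟨⟨L', hL', rfl⟩, hm'⟩
  obtain ⟨m', hm'L', hbits⟩ := List.mem_map.1 hm'
  obtain rfl := bits_injOn n (h.lt_of_mem (List.mem_flatten.2 ⟨L', hL', hm'L'⟩)) hm hbits
  rw [List.eq_of_mem_of_nodup_flatten (h.2.nodup_iff.2 List.nodup_range) hL' hL hm'L' hmL]

def consecutivePairs {α : Type*} (S : List (List α)) : List (α × α) :=
  S.flatMap fun L => L.zip L.tail

theorem mem_flatten_of_mem_consecutivePairs {α : Type*} {S : List (List α)} {p : α × α}
    (hp : p ∈ consecutivePairs S) : p.1 ∈ S.flatten ∧ p.2 ∈ S.flatten := by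
  obtain ⟨L, hL, hpL⟩ := List.mem_flatMap.1 hp
  obtain ⟨h₁, h₂⟩ := List.of_mem_zip hpL
  exact ⟨List.mem_flatten.2 ⟨L, hL, h₁⟩, List.mem_flatten.2 ⟨L, hL, List.mem_of_mem_tail h₂⟩⟩

theorem chainEdges_map {α β : Type*} (f : α → β) (L : List α) :
    chainEdges (L.map f) = {e | ∃ p ∈ L.zip L.tail, s(f p.1, f p.2) = e} := by
  ext e
  constructor
  · rintro ⟨i, hi, rfl⟩
    simp only [List.length_map] at hi
    refine ⟨(L[i], L[i + 1]), List.mem_iff_getElem.2 ⟨i, by simp; omega, by simp⟩, by simp⟩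
  · rintro ⟨p, hp, rfl⟩
    obtain ⟨i, hi, rfl⟩ := List.getElem_of_mem hp
    exact ⟨i, by simp at hi ⊢; omega, by simp⟩

theorem mem_scdEdges_image {n : ℕ} {α : Type*} {f : α → Fin n → Bool} {S : List (List α)}
    {e : Sym2 (Fin n → Bool)} :
    e ∈ scdEdges (List.map f '' {L | L ∈ S}) ↔
      ∃ p ∈ consecutivePairs S, s(f p.1, f p.2) = e := by
  simp only [scdEdges, Set.mem_iUnion₂, Set.mem_image, exists_prop, consecutivePairs,
    List.mem_flatMap]
  constructor
  · rintro ⟨_, ⟨L, hL, rfl⟩, he⟩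
    obtain ⟨p, hp, rfl⟩ := (chainEdges_map f L).subset he
    exact ⟨p, ⟨L, hL, hp⟩, rfl⟩
  · rintro ⟨p, ⟨L, hL, hp⟩, rfl⟩
    exact ⟨_, ⟨L, hL, rfl⟩, (chainEdges_map f L).superset ⟨p, hp, rfl⟩⟩

theorem IsCodeSCD.edgeDisjoint {n : ℕ} {S T : List (List ℕ)} (hS : IsCodeSCD n S)
    (hT : IsCodeSCD n T)
    (h : ∀ p ∈ consecutivePairs S, p ∉ consecutivePairs T ∧ p.swap ∉ consecutivePairs T) :
    EdgeDisjointSCD (List.map (bits n) '' {L | L ∈ S}) (List.map (bits n) '' {L | L ∈ T}) := by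
  refine Set.disjoint_left.2 fun e heS heT => ?_
  obtain ⟨p, hp, rfl⟩ := mem_scdEdges_image.1 heS
  obtain ⟨q, hq, hqp⟩ := mem_scdEdges_image.1 heT
  have hp' := (mem_flatten_of_mem_consecutivePairs hp).imp hS.lt_of_mem hS.lt_of_mem
  have hq' := (mem_flatten_of_mem_consecutivePairs hq).imp hT.lt_of_mem hT.lt_of_mem
  rcases Sym2.eq_iff.1 hqp with ⟨h1, h2⟩ | ⟨h1, h2⟩
  · have : q = p := Prod.ext (bits_injOn n hq'.1 hp'.1 h1) (bits_injOn n hq'.2 hp'.2 h2)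
    exact (h p hp).1 (this ▸ hq)
  · have : q = p.swap := Prod.ext (bits_injOn n hq'.1 hp'.2 h1) (bits_injOn n hq'.2 hp'.1 h2)
    exact (h p hp).2 (this ▸ hq)

def q7SCDCodes : Fin 4 → List (List ℕ) :=
  ![[[0, 16, 20, 52, 116, 118, 119, 127],
    [2, 66, 98, 114, 122, 126],
    [4, 12, 13, 15, 79, 95],
    [8, 9, 41, 105, 107, 123],
    [64, 68, 69, 77, 93, 125],
    [1, 5, 7, 39, 47, 63],
    [32, 96, 100, 101, 109, 111],
    [17, 25, 27, 31],
    [80, 81, 113, 117],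
    [33, 97, 99, 103],
    [48, 112, 120, 121],
    [34, 50, 51, 115],
    [3, 11, 75, 91],
    [36, 44, 46, 110],
    [72, 76, 92, 124],
    [24, 88, 90, 94],
    [10, 26, 58, 59],
    [18, 19, 23, 55],
    [40, 56, 57, 61],
    [6, 22, 54, 62],
    [65, 67, 83, 87],
    [14, 30],
    [21, 29],
    [28, 60],
    [35, 43],
    [37, 45],
    [38, 102],
    [42, 106],
    [49, 53],
    [70, 71],
    [73, 89],
    [74, 78],
    [82, 86],
    [84, 85],
    [104, 108]],
   [[0, 1, 17, 49, 57, 121, 123, 127],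
    [16, 24, 28, 29, 31, 63],
    [64, 80, 84, 92, 93, 95],
    [8, 12, 44, 45, 47, 111],
    [4, 6, 7, 23, 87, 119],
    [2, 18, 50, 114, 118, 126],
    [32, 48, 56, 60, 61, 125],
    [34, 98, 102, 103],
    [33, 41, 43, 59],
    [9, 73, 75, 107],
    [20, 21, 53, 55],
    [3, 19, 27, 91],
    [36, 38, 46, 62],
    [72, 88, 120, 124],
    [68, 76, 108, 110],
    [66, 67, 99, 115],
    [96, 97, 101, 117],
    [10, 14, 78, 94],
    [5, 13, 77, 109],
    [65, 69, 71, 79],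
    [40, 42, 58, 122],
    [11, 15],
    [22, 30],
    [25, 89],
    [26, 90],
    [35, 51],
    [37, 39],
    [52, 54],
    [70, 86],
    [74, 106],
    [81, 85],
    [82, 83],
    [100, 116],
    [104, 105],
    [112, 113]],
   [[6, 14, 46, 47],
    [12, 76, 78, 110],
    [8, 24, 56, 120, 122, 123],
    [1, 9, 25, 57, 59, 63],
    [11, 27],
    [13, 29],
    [5, 69, 85, 93],
    [19, 51],
    [21, 23],
    [48, 50, 58, 62],
    [40, 41, 45, 61],
    [44, 60],
    [66, 70, 102, 118],
    [17, 81, 83, 91],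
    [82, 90],
    [16, 80, 88, 89, 121, 125],
    [65, 97, 105, 109],
    [18, 26, 30, 31],
    [7, 15],
    [49, 113],
    [64, 96, 112, 114, 115, 119],
    [98, 99],
    [34, 38, 54, 55],
    [72, 104, 106, 107],
    [42, 43],
    [73, 77],
    [36, 52, 53, 117],
    [10, 74, 75, 79],
    [32, 33, 37, 101, 103, 111],
    [35, 39],
    [0, 2, 3, 67, 71, 87, 95, 127],
    [4, 20, 28, 92, 94, 126],
    [22, 86],
    [100, 108],
    [68, 84, 116, 124]],
   [[41, 57],
    [42, 46],
    [50, 54],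
    [56, 58],
    [67, 75],
    [69, 101],
    [76, 77],
    [80, 112, 116, 117],
    [82, 114],
    [88, 92],
    [97, 113],
    [104, 120],
    [20, 84, 86, 118],
    [12, 28, 30, 94],
    [14, 15],
    [9, 13, 45, 109],
    [10, 11, 43, 47],
    [16, 18, 22, 23, 31, 95],
    [48, 52, 60, 62],
    [17, 19, 83, 115],
    [5, 21, 85, 87],
    [24, 26, 27, 59],
    [25, 29],
    [65, 81, 89, 93],
    [72, 73, 105, 121],
    [64, 66, 74, 90, 91, 123],
    [96, 98, 106, 122],
    [3, 7, 71, 103],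
    [1, 33, 49, 51, 55, 119],
    [38, 39],
    [2, 6, 70, 78, 79, 111],
    [34, 35, 99, 107],
    [4, 68, 100, 102, 110, 126],
    [8, 40, 44, 108, 124, 125],
    [0, 32, 36, 37, 53, 61, 63, 127]]]

set_option maxRecDepth 4000 in
theorem q7SCDCodes_isCodeSCD : ∀ i, IsCodeSCD 7 (q7SCDCodes i) := by
  decide

set_option maxRecDepth 4000 in
theorem q7SCDCodes_consecutivePairs_disjoint :
    ∀ i j, i < j → ∀ p ∈ consecutivePairs (q7SCDCodes i),
      p ∉ consecutivePairs (q7SCDCodes j) ∧ p.swap ∉ consecutivePairs (q7SCDCodes j) := by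
  decide

/-- The 7-cube contains four pairwise edge-disjoint symmetric chain decompositions. -/
theorem four_edge_disjoint_SCDs_Q7 :
    ∃ D : Fin 4 → Set (List (Fin 7 → Bool)),
      (∀ i, IsSCD 7 (D i)) ∧ ∀ i j, i ≠ j → EdgeDisjointSCD (D i) (D j) := by
  have hdisj {i j : Fin 4} (hij : i < j) :=
    (q7SCDCodes_isCodeSCD i).edgeDisjoint (q7SCDCodes_isCodeSCD j)
      (q7SCDCodes_consecutivePairs_disjoint i j hij)
  refine ⟨fun i => List.map (bits 7) '' {L | L ∈ q7SCDCodes i},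
    fun i => (q7SCDCodes_isCodeSCD i).isSCD, fun i j hij => ?_⟩
  rcases hij.lt_or_gt with hij | hij
  · exact hdisj hij
  · exact (hdisj hij).symm
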